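/- Let N, M, K be positive natural numbers and let s ∈ ℝ^N be a vector whose entries lie in {0,1} with ∑_{n=1}^{N} s_n = M. Regard diag(s) as a complex N×N matrix. Then for A ∈ ℂ^{N×K} and X_MC ∈ ℂ^{N×K}, the equality X_MC = diag(s)·A holds if and only if there exist matrices U ∈ ℂ^{N×N} and V ∈ ℂ^{K×K} such that the block matrix [[U, X_MC, diag(s)], [X_MCᴴ, V, Aᴴ], [diag(s), A, I_N]] is positive semidefinite and Re(Tr(U)) − M ≤ 0. -/

import Mathlib

/-! Taking the Schur complement of the identity block turns the LMI into
`[[U - B Bᴴ, X - B A], [(X - B A)ᴴ, V - Aᴴ A]] ⪰ 0`. The trace condition forces the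
positive semidefinite block `U - B Bᴴ` to vanish, and a positive semidefinite matrix with a
zero diagonal block has zero off-diagonal blocks, so `X = B A`. For `B = diag(s)` with `s` a
`0-1` vector, `B Bᴴ = diag(s)` has trace `∑ s_n = M`. -/

open Matrix
open scoped ComplexOrder

namespace Matrix

variable {𝕜 : Type*} [RCLike 𝕜] {m n k : Type*} [Fintype m] [Fintype n] [Fintype k]

theorem PosSemidef.eq_zero_of_re_trace_nonpos {A : Matrix n n 𝕜} (hA : A.PosSemidef)
    (htr : RCLike.re A.trace ≤ 0) : A = 0 := by
  obtain ⟨hre, him⟩ := RCLike.nonneg_iff.mp hA.trace_nonneg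
  refine hA.trace_eq_zero_iff.mp (RCLike.ext ?_ ?_) <;> simp [le_antisymm htr hre, him]

theorem PosSemidef.eq_zero_of_fromBlocks_zero₁₁ {B : Matrix m n 𝕜} {D : Matrix n n 𝕜}
    (h : (fromBlocks 0 B Bᴴ D).PosSemidef) : B = 0 := by
  classical
  suffices Bᴴ = 0 from conjTranspose_eq_zero.mp this
  ext j i
  have hcol := (h.dotProduct_mulVec_zero_iff (Pi.single (Sum.inl i) 1)).mp (by simp)
  simpa using congrFun hcol (Sum.inr j)

theorem posSemidef_fromBlocks_fromRows_fromCols_one_iff [DecidableEq n]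
    (U : Matrix m m 𝕜) (X : Matrix m k 𝕜) (V : Matrix k k 𝕜) (B : Matrix m n 𝕜)
    (A : Matrix n k 𝕜) :
    (fromBlocks (fromBlocks U X Xᴴ V) (fromRows B Aᴴ) (fromCols Bᴴ A) 1).PosSemidef ↔
      (fromBlocks (U - B * Bᴴ) (X - B * A) (X - B * A)ᴴ (V - Aᴴ * A)).PosSemidef := by
  let : Invertible (1 : Matrix n n 𝕜) := invertibleOne
  have hQ : fromCols Bᴴ A = (fromRows B Aᴴ)ᴴ := by
    rw [conjTranspose_fromRows_eq_fromCols_conjTranspose, conjTranspose_conjTranspose]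
  rw [hQ, PosDef.fromBlocks₂₂ _ _ PosDef.one, inv_one, Matrix.mul_one,
    conjTranspose_fromRows_eq_fromCols_conjTranspose, fromRows_mul_fromCols,
    conjTranspose_conjTranspose]
  congr! 1
  ext (i | i) (j | j) <;> simp

theorem eq_mul_iff_exists_posSemidef_fromBlocks [DecidableEq n]
    (B : Matrix m n 𝕜) (A : Matrix n k 𝕜) (X : Matrix m k 𝕜) :
    X = B * A ↔ ∃ (U : Matrix m m 𝕜) (V : Matrix k k 𝕜),
      (fromBlocks (fromBlocks U X Xᴴ V) (fromRows B Aᴴ) (fromCols Bᴴ A) 1).PosSemidef ∧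
        RCLike.re U.trace ≤ RCLike.re (B * Bᴴ).trace := by
  simp only [posSemidef_fromBlocks_fromRows_fromCols_one_iff]
  constructor
  · rintro rfl
    exact ⟨B * Bᴴ, Aᴴ * A, by simpa using PosSemidef.zero, le_rfl⟩
  · rintro ⟨U, V, hP, htr⟩
    have hU : U - B * Bᴴ = 0 := by
      have hP₁₁ : (U - B * Bᴴ).PosSemidef := hP.submatrix Sum.inl
      exact hP₁₁.eq_zero_of_re_trace_nonpos (by simpa [trace_sub] using htr)
    rw [hU] at hP
    exact sub_eq_zero.mp hP.eq_zero_of_fromBlocks_zero₁₁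

end Matrix

theorem stmt_13_general (N M K : ℕ)
    (s : Fin N → ℝ) (hbin : ∀ n, s n = 0 ∨ s n = 1) (hsum : (∑ n, s n) = (M : ℝ))
    (A : Matrix (Fin N) (Fin K) ℂ) (XMC : Matrix (Fin N) (Fin K) ℂ) :
    XMC = Matrix.diagonal (fun n => (s n : ℂ)) * A ↔
      ∃ (U : Matrix (Fin N) (Fin N) ℂ) (V : Matrix (Fin K) (Fin K) ℂ),
        (Matrix.fromBlocks
            (Matrix.fromBlocks U XMC XMCᴴ V)
            (Matrix.fromRows (Matrix.diagonal fun n => (s n : ℂ)) Aᴴ)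
            (Matrix.fromCols (Matrix.diagonal fun n => (s n : ℂ)) A)
            (1 : Matrix (Fin N) (Fin N) ℂ)).PosSemidef ∧
        (Matrix.trace U).re - (M : ℝ) ≤ 0 := by
  set D : Matrix (Fin N) (Fin N) ℂ := diagonal fun n => (s n : ℂ)
  have hDH : Dᴴ = D := by simp [D]
  have hDD : D * Dᴴ = D := by
    rw [hDH, diagonal_mul_diagonal]
    congr 1 with n
    rcases hbin n with h | h <;> simp [h]
  have htr : (trace D).re = M := by simp [D, trace_diagonal, ← Complex.ofReal_sum, hsum]
  have hLMI := eq_mul_iff_exists_posSemidef_fromBlocks D A XMC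
  rw [hDD, hDH] at hLMI
  simpa [htr, sub_nonpos] using hLMI

/-- The LMI reformulation (constraints C6c and C6d) from the mutual-coupling Appendix
of the paper: for a `0-1` vector `s` with `∑_n s_n = M`, the equality
`X_MC = diag(s)·A` holds iff there exist `U`, `V` such that
`[[U, X_MC, diag(s)], [X_MCᴴ, V, Aᴴ], [diag(s), A, I_N]] ⪰ 0` and `Re(Tr U) − M ≤ 0`. -/
theorem stmt_13 (N M K : ℕ) (hN : 0 < N) (hM : 0 < M) (hK : 0 < K)
    (s : Fin N → ℝ) (hbin : ∀ n, s n = 0 ∨ s n = 1) (hsum : (∑ n, s n) = (M : ℝ))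
    (A : Matrix (Fin N) (Fin K) ℂ) (XMC : Matrix (Fin N) (Fin K) ℂ) :
    XMC = Matrix.diagonal (fun n => (s n : ℂ)) * A ↔
      ∃ (U : Matrix (Fin N) (Fin N) ℂ) (V : Matrix (Fin K) (Fin K) ℂ),
        (Matrix.fromBlocks
            (Matrix.fromBlocks U XMC XMCᴴ V)
            (Matrix.fromRows (Matrix.diagonal fun n => (s n : ℂ)) Aᴴ)
            (Matrix.fromCols (Matrix.diagonal fun n => (s n : ℂ)) A)
            (1 : Matrix (Fin N) (Fin N) ℂ)).PosSemidef ∧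
        (Matrix.trace U).re - (M : ℝ) ≤ 0 :=
  stmt_13_general N M K s hbin hsum A XMC
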